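/- arXiv:1906.08741 — 8 statements merged into one kernel-verified Lean document; each statement's English description precedes it below -/
import Mathlib

section
/- Let K be a field of characteristic zero, let n ≥ 1, let a_0, …, a_{n−1} ∈ K, and let x ∈ K with x + j ≠ 0 for all j = 0, …, n−1. Then ∑_{k=0}^{n−1} ((x)_k / k!) · a_k = (x)_n · ∑_{j=0}^{n−1} ((−1)^j T_j / (j!(n−1−j)!)) · 1/(x+j), where T_j := ∑_{k=0}^j (−1)^k C(j,k) a_k. -/
open Polynomial Finset

private lemma asc_eval_prod {K : Type*} [CommRing K] (n : ℕ) (x : K) :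
    (ascPochhammer K n).eval x = ∏ i ∈ range n, (x + i) := by
  induction n with
  | zero => simp
  | succ n ih => rw [ascPochhammer_succ_eval, prod_range_succ, ih]

private lemma nat_prod_rev (j : ℕ) : ∏ i ∈ range j, (j - i) = j.factorial := by
  rw [← prod_range_reflect, ← Finset.prod_range_add_one_eq_factorial]
  refine prod_congr rfl fun i hi => ?_
  simp only [mem_range] at hi; omega

private lemma prod_erase_sub {K : Type*} [Field K] [CharZero K] {n j : ℕ} (hj : j < n) :
    ∏ i ∈ (range n).erase j, ((i : K) - j)
      = (-1) ^ j * (j.factorial : K) * ((n - 1 - j).factorial : K) := by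
  have hset : (range n).erase j = range j ∪ Ico (j + 1) n := by
    ext i
    simp only [mem_erase, mem_range, mem_union, mem_Ico]
    omega
  have hdisj : Disjoint (range j) (Ico (j + 1) n) := by
    rw [Finset.disjoint_left]
    intro i hi hi'
    simp only [mem_range] at hi
    simp only [mem_Ico] at hi'
    omega
  rw [hset, prod_union hdisj]
  have h1 : ∏ i ∈ range j, ((i : K) - j) = (-1) ^ j * (j.factorial : K) := by
    have : ∀ i ∈ range j, ((i : K) - j) = -(((j - i : ℕ) : K)) := by
      intro i hi
      simp only [mem_range] at hi
      push_cast [Nat.cast_sub hi.le]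
      ring
    rw [prod_congr rfl this, prod_congr rfl (fun i _ => neg_eq_neg_one_mul _),
      prod_mul_distrib, prod_const, card_range, ← Nat.cast_prod, nat_prod_rev]
  have h2 : ∏ i ∈ Ico (j + 1) n, ((i : K) - j) = ((n - 1 - j).factorial : K) := by
    rw [prod_Ico_eq_prod_range, show n - (j + 1) = n - 1 - j from by omega]
    have : ∀ i ∈ range (n - 1 - j), (((j + 1 + i : ℕ) : K) - j) = ((i + 1 : ℕ) : K) := by
      intro i _
      push_cast; ring
    rw [prod_congr rfl this, ← Nat.cast_prod, Finset.prod_range_add_one_eq_factorial]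
  rw [h1, h2]

theorem stmt4 {K : Type*} [Field K] [CharZero K] (n : ℕ) (hn : 1 ≤ n) (a : ℕ → K)
    (x : K) (hx : ∀ j < n, x + (j : K) ≠ 0) :
    ∑ k ∈ Finset.range n, (ascPochhammer K k).eval x / (Nat.factorial k : K) * a k
      = (ascPochhammer K n).eval x *
          ∑ j ∈ Finset.range n,
            (-1 : K) ^ j *
              (∑ k ∈ Finset.range (j + 1), (-1 : K) ^ k * (j.choose k : K) * a k) /
              ((Nat.factorial j : K) * (Nat.factorial (n - 1 - j) : K)) * (1 / (x + j)) := by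
  classical
  set v : ℕ → K := fun i => -(i : K) with hv
  set P : K[X] := ∑ k ∈ range n, C (a k / (k.factorial : K)) * ascPochhammer K k with hPdef
  have hinj : Set.InjOn v (range n) := by
    intro i _ j _ h
    simpa [hv, Nat.cast_inj] using neg_injective h
  have hdeg : P.degree < (#(range n) : ℕ) := by
    rw [card_range]
    refine lt_of_le_of_lt (degree_sum_le _ _) ?_
    rw [Finset.sup_lt_iff (by exact_mod_cast WithBot.bot_lt_coe n)]
    intro k hk
    simp only [mem_range] at hk
    have hdk : (ascPochhammer K k).degree ≤ (k : WithBot ℕ) := by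
      simpa [ascPochhammer_natDegree] using degree_le_natDegree (p := ascPochhammer K k)
    calc (C (a k / (k.factorial : K)) * ascPochhammer K k).degree
        ≤ 0 + (k : WithBot ℕ) := degree_mul_le_of_le degree_C_le hdk
      _ < (n : WithBot ℕ) := by rw [zero_add]; exact_mod_cast hk
  -- value of P at nodes
  have hnode : ∀ j < n, P.eval (v j)
      = ∑ k ∈ range (j + 1), (-1 : K) ^ k * (j.choose k : K) * a k := by
    intro j hj
    rw [hPdef, eval_finset_sum]
    simp only [eval_mul, eval_C, hv]
    have hval : ∀ k, (ascPochhammer K k).eval (-(j : K))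
        = (-1 : K) ^ k * (j.descFactorial k : K) := by
      intro k
      rw [ascPochhammer_eval_neg_eq_descPochhammer K ((j : K)) k,
        descPochhammer_eval_eq_descFactorial]
    calc ∑ k ∈ range n, a k / (k.factorial : K) * (ascPochhammer K k).eval (-(j : K))
        = ∑ k ∈ range n, (-1 : K) ^ k * (j.choose k : K) * a k := by
          refine Finset.sum_congr rfl fun k _ => ?_
          rw [hval, Nat.descFactorial_eq_factorial_mul_choose]
          have hkf : (k.factorial : K) ≠ 0 := Nat.cast_ne_zero.2 k.factorial_ne_zero
          push_cast
          field_simp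
      _ = ∑ k ∈ range (j + 1), (-1 : K) ^ k * (j.choose k : K) * a k := by
          refine (Finset.sum_subset (Finset.range_subset_range.2 hj) ?_).symm
          intro k _ hk
          simp only [mem_range, Nat.lt_succ_iff, not_le] at hk
          simp [Nat.choose_eq_zero_of_lt hk]
  -- value of basis polynomials at x
  have hbasis : ∀ j < n, (Lagrange.basis (range n) v j).eval x
      = (-1 : K) ^ j * ((j.factorial : K) * ((n - 1 - j).factorial : K))⁻¹ *
        ((ascPochhammer K n).eval x / (x + j)) := by
    intro j hj
    have hxj := hx j hj
    rw [Lagrange.basis, eval_prod]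
    have : ∀ i ∈ (range n).erase j,
        (Lagrange.basisDivisor (v j) (v i)).eval x = ((i : K) - j)⁻¹ * (x + i) := by
      intro i hi
      rw [Lagrange.basisDivisor]
      simp only [eval_mul, eval_C, eval_sub, eval_X, hv]
      ring_nf
    have hE : ∏ i ∈ (range n).erase j, (x + (i : K)) = (ascPochhammer K n).eval x / (x + j) := by
      rw [eq_div_iff hxj, mul_comm, asc_eval_prod]
      exact Finset.mul_prod_erase (range n) (fun i => x + (i : K)) (mem_range.2 hj)
    rw [prod_congr rfl this, prod_mul_distrib, prod_inv_distrib, prod_erase_sub hj, hE]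
    have hneg : (((-1 : K) ^ j))⁻¹ = (-1 : K) ^ j := by
      rw [← inv_pow]; norm_num
    rw [mul_inv, mul_inv, hneg]
    ring
  -- LHS equals P.eval x
  have hLHS : ∑ k ∈ range n, (ascPochhammer K k).eval x / (k.factorial : K) * a k
      = P.eval x := by
    rw [hPdef, eval_finset_sum]
    refine Finset.sum_congr rfl fun k _ => ?_
    simp only [eval_mul, eval_C]
    ring
  have hP := Lagrange.eq_interpolate (f := P) hinj hdeg
  rw [hLHS, hP, Lagrange.interpolate_apply, eval_finset_sum, Finset.mul_sum]
  refine Finset.sum_congr rfl fun j hj => ?_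
  rw [mem_range] at hj
  rw [eval_mul, eval_C, hnode j hj, hbasis j hj]
  have hxj := hx j hj
  have h1 : (j.factorial : K) ≠ 0 := Nat.cast_ne_zero.2 j.factorial_ne_zero
  have h2 : ((n - 1 - j).factorial : K) ≠ 0 := Nat.cast_ne_zero.2 (n - 1 - j).factorial_ne_zero
  have h3 : ((-1 : K) ^ j) ≠ 0 := pow_ne_zero _ (by norm_num)
  field_simp
end

section
/- Let p be a prime, let a_0, …, a_{p−1} be p-adic integers, and let x be a p-adic integer. Then ∑_{k=0}^{p−1} ((x)_k / k!) · a_k ≡ T_{⟨−x⟩_p} (mod p), where T_j := ∑_{k=0}^j (−1)^k C(j,k) a_k. -/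
/-!
Write `r = ⟨-x⟩_p`, so that `x ≡ -r (mod p)`. Since polynomials with `p`-adic integer
coefficients preserve congruences, `(x)_k ≡ (-r)_k = (-1)^k k! C(r,k) (mod p)`, and for `k < p`
the factor `k!` is a `p`-adic unit, so `(x)_k / k! ≡ (-1)^k C(r,k) (mod p)`. Summing against
the `a_k` and dropping the vanishing terms `k > r` gives the congruence, by the ultrametric
inequality.
-/

open Polynomial

theorem ascPochhammer_eval_neg_natCast (R : Type*) [CommRing R] (r k : ℕ) :
    (ascPochhammer R k).eval (-(r : R)) = (-1) ^ k * k.factorial * r.choose k := by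
  rw [ascPochhammer_eval_neg_eq_descPochhammer, descPochhammer_eval_eq_descFactorial,
    Nat.descFactorial_eq_factorial_mul_choose, Nat.cast_mul, mul_assoc]

namespace PadicInt

variable {p : ℕ} [Fact p.Prime]

theorem norm_eval_sub_eval_le (f : ℤ_[p][X]) (x y : ℤ_[p]) :
    ‖f.eval x - f.eval y‖ ≤ ‖x - y‖ := by
  obtain ⟨c, hc⟩ := sub_dvd_eval_sub x y f
  rw [hc, norm_mul]
  exact mul_le_of_le_one_right (norm_nonneg _) (norm_le_one c)

theorem norm_add_zmodRepr_neg_le (x : ℤ_[p]) : ‖x + (zmodRepr (-x) : ℤ_[p])‖ ≤ (p : ℝ)⁻¹ := by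
  have hlt : ‖-x - zmodRepr (-x)‖ < 1 := mem_nonunits.mp (sub_zmodRepr_mem (-x))
  rw [← zpow_neg_one, norm_le_pow_iff_norm_lt_pow_add_one, ← norm_neg, neg_add']
  simpa using hlt

end PadicInt

namespace Padic

variable {p : ℕ} [Fact p.Prime]

theorem norm_factorial_of_lt {k : ℕ} (hk : k < p) : ‖(k.factorial : ℚ_[p])‖ = 1 := by
  rw [norm_natCast_eq_one_iff, Nat.Prime.coprime_iff_not_dvd Fact.out,
    Nat.Prime.dvd_factorial Fact.out]
  exact hk.not_ge

theorem norm_ascPochhammer_div_factorial_sub_le (x : ℤ_[p]) {k : ℕ} (hk : k < p) :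
    ‖(((ascPochhammer ℤ_[p] k).eval x : ℤ_[p]) : ℚ_[p]) / k.factorial
        - (-1) ^ k * ((PadicInt.zmodRepr (-x)).choose k : ℚ_[p])‖ ≤ (p : ℝ)⁻¹ := by
  set r := PadicInt.zmodRepr (-x)
  have hfac : (k.factorial : ℚ_[p]) ≠ 0 := Nat.cast_ne_zero.mpr k.factorial_ne_zero
  have hneg_r : (-1) ^ k * (r.choose k : ℚ_[p])
      = (((ascPochhammer ℤ_[p] k).eval (-(r : ℤ_[p])) : ℤ_[p]) : ℚ_[p]) / k.factorial := by
    rw [ascPochhammer_eval_neg_natCast, eq_div_iff hfac]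
    push_cast
    ring
  rw [hneg_r, ← sub_div, norm_div, norm_factorial_of_lt hk, div_one, ← PadicInt.coe_sub,
    PadicInt.padic_norm_e_of_padicInt]
  calc _ ≤ ‖x - -(r : ℤ_[p])‖ := PadicInt.norm_eval_sub_eval_le _ x _
    _ ≤ (p : ℝ)⁻¹ := by rw [sub_neg_eq_add]; exact PadicInt.norm_add_zmodRepr_neg_le x

end Padic

theorem stmt5 (p : ℕ) [Fact p.Prime] (a : ℕ → ℤ_[p]) (x : ℤ_[p]) :
    ‖(∑ k ∈ Finset.range p,
        (↑((ascPochhammer ℤ_[p] k).eval x) : ℚ_[p]) / (Nat.factorial k : ℚ_[p]) * (a k : ℚ_[p]))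
      - ((∑ k ∈ Finset.range (PadicInt.zmodRepr (-x) + 1),
            (-1 : ℤ_[p]) ^ k * ((PadicInt.zmodRepr (-x)).choose k : ℤ_[p]) * a k : ℤ_[p]) : ℚ_[p])‖
      ≤ (p : ℝ) ^ (-1 : ℤ) := by
  set r := PadicInt.zmodRepr (-x)
  have hextend : ∑ k ∈ Finset.range (r + 1), (-1 : ℤ_[p]) ^ k * (r.choose k : ℤ_[p]) * a k
      = ∑ k ∈ Finset.range p, (-1 : ℤ_[p]) ^ k * (r.choose k : ℤ_[p]) * a k := by
    refine Finset.sum_subset (Finset.range_subset_range.mpr (PadicInt.zmodRepr_lt_p _))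
      fun k _ hk => ?_
    rw [Nat.choose_eq_zero_of_lt (by simpa using hk)]
    simp
  rw [hextend, zpow_neg_one]
  rw [PadicInt.coe_sum, ← Finset.sum_sub_distrib]
  refine IsUltrametricDist.norm_sum_le_of_forall_le_of_nonneg (by positivity) fun k hk => ?_
  push_cast
  rw [← sub_mul, norm_mul, PadicInt.padic_norm_e_of_padicInt]
  exact (mul_le_of_le_one_right (norm_nonneg _) (PadicInt.norm_le_one _)).trans
    (Padic.norm_ascPochhammer_div_factorial_sub_le x (Finset.mem_range.mp hk))
end

section
/- For all integers n ≥ 1 and r ≥ 0, one has the identity in ℚ: ∑_{k=1}^n (−1)^k C(n,k) · S_k({1}^r)/k = −H_n^{(r+1)}. -/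
/-- Non-strict multiple harmonic sum
`S_n({t}^r) = ∑_{1 ≤ j₁ ≤ ⋯ ≤ j_r ≤ n} 1/(j₁^t ⋯ j_r^t)`, defined by recursion on the
number `r` of indices (summing over the largest index `j_r`). -/
def mhs (t : ℕ) : ℕ → ℕ → ℚ
  | 0, _ => 1
  | r + 1, n => ∑ j ∈ Finset.Icc 1 n, mhs t r j / (j : ℚ) ^ t

/-- The harmonic number of order `t`: `H_n^{(t)} = ∑_{j=1}^n 1/j^t`. -/
def harm (t n : ℕ) : ℚ := ∑ j ∈ Finset.Icc 1 n, 1 / (j : ℚ) ^ t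

/-!
Write `G r m = ∑_{k=1}^m (-1)^k C(m,k) S_k({1}^r)`. Pascal's rule together with
`C(n,k-1)/k = C(n+1,k)/(n+1)` shows that the left-hand side grows by `G r (n+1) / (n+1)` when `n`
is replaced by `n + 1`, so it suffices that `G r m = -1/m^r` for `m ≥ 1`. For `r = 0` this is the
vanishing of the full alternating binomial sum. For the step, exchanging the two summations in
`G (r+1) m` produces the tail sums `∑_{k ≥ j} (-1)^k C(m,k) = (-1)^j C(m-1,j-1)`, and
`C(m-1,j-1)/j = C(m,j)/m` turns the result into `G r m / m`.
-/

open Finset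

theorem sum_Icc_neg_one_pow_mul_choose_succ {R : Type*} [CommRing R] {m j : ℕ} (hj : j ≤ m) :
    ∑ k ∈ Icc (j + 1) (m + 1), (-1 : R) ^ k * ((m + 1).choose k : R)
      = (-1) ^ (j + 1) * (m.choose j : R) := by
  have hpartial := congrArg (Int.cast : ℤ → R)
    (Int.alternating_sum_range_choose_eq_choose (n := m) (m := j))
  have htotal := congrArg (Int.cast : ℤ → R)
    (Int.alternating_sum_range_choose_of_ne (n := m + 1) m.succ_ne_zero)
  push_cast at hpartial htotal
  rw [← sum_range_add_sum_Ico _ (by omega : j + 1 ≤ m + 1 + 1), hpartial,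
    Ico_add_one_right_eq_Icc] at htotal
  linear_combination htotal

section
variable {K : Type*} [Field K] [CharZero K]

theorem choose_div_succ_eq (n k : ℕ) :
    (n.choose k : K) / (k + 1) = (n + 1).choose (k + 1) / (n + 1) := by
  rw [div_eq_div_iff (Nat.cast_add_one_ne_zero k) (Nat.cast_add_one_ne_zero n), mul_comm]
  exact_mod_cast Nat.add_one_mul_choose_eq n k

theorem sum_Icc_neg_one_pow_mul_choose_mul_sum_div (b : ℕ → K) (m : ℕ) :
    ∑ k ∈ Icc 1 (m + 1), (-1 : K) ^ k * ((m + 1).choose k : K) * ∑ j ∈ Icc 1 k, b j / j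
      = (∑ j ∈ Icc 1 (m + 1), (-1 : K) ^ j * ((m + 1).choose j : K) * b j) / (m + 1) := by
  calc _ = ∑ k ∈ Icc 1 (m + 1), ∑ j ∈ Icc 1 k,
            (-1 : K) ^ k * ((m + 1).choose k : K) * (b j / j) := by
          simp only [mul_sum]
    _ = ∑ j ∈ Icc 1 (m + 1),
            (∑ k ∈ Icc j (m + 1), (-1 : K) ^ k * ((m + 1).choose k : K)) * (b j / j) := by
          simp only [sum_mul]
          exact sum_comm' (fun k j => by simp only [mem_Icc]; omega)
    _ = ∑ j ∈ Icc 1 (m + 1), (-1 : K) ^ j * ((m + 1).choose j : K) * b j / (m + 1) := by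
          refine sum_congr rfl fun j hj => ?_
          obtain ⟨i, rfl⟩ : ∃ i, j = i + 1 := ⟨j - 1, by simp only [mem_Icc] at hj; omega⟩
          rw [sum_Icc_neg_one_pow_mul_choose_succ (by simp only [mem_Icc] at hj; omega)]
          push_cast
          linear_combination (-1 : K) ^ (i + 1) * b (i + 1) * choose_div_succ_eq (K := K) m i
    _ = _ := by rw [sum_div]

theorem sum_Icc_neg_one_pow_mul_choose_succ_mul_div (a : ℕ → K) (n : ℕ) :
    ∑ k ∈ Icc 1 (n + 1), (-1 : K) ^ k * ((n + 1).choose k : K) * (a k / k)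
      = ∑ k ∈ Icc 1 n, (-1 : K) ^ k * (n.choose k : K) * (a k / k)
        + (∑ k ∈ Icc 1 (n + 1), (-1 : K) ^ k * ((n + 1).choose k : K) * a k) / (n + 1) := by
  have hpascal : ∀ k ∈ Icc 1 (n + 1), (-1 : K) ^ k * ((n + 1).choose k : K) * (a k / k)
      = (-1 : K) ^ k * (n.choose k : K) * (a k / k)
        + (-1 : K) ^ k * ((n + 1).choose k : K) * a k / (n + 1) := by
    intro k hk
    obtain ⟨i, rfl⟩ : ∃ i, k = i + 1 := ⟨k - 1, by simp only [mem_Icc] at hk; omega⟩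
    have hsucc : ((n + 1).choose (i + 1) : K) = n.choose i + n.choose (i + 1) := by
      exact_mod_cast Nat.choose_succ_succ n i
    push_cast
    linear_combination (-1 : K) ^ (i + 1) * a (i + 1) / ((i : K) + 1) * hsucc
      + (-1 : K) ^ (i + 1) * a (i + 1) * choose_div_succ_eq (K := K) n i
  rw [sum_congr rfl hpascal, sum_add_distrib, sum_div, sum_Icc_succ_top (by omega : 1 ≤ n + 1),
    Nat.choose_succ_self, Nat.cast_zero, mul_zero, zero_mul, add_zero]

end

theorem sum_Icc_neg_one_pow_mul_choose_mul_mhs_one (m r : ℕ) :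
    ∑ k ∈ Icc 1 (m + 1), (-1 : ℚ) ^ k * ((m + 1).choose k : ℚ) * mhs 1 r k
      = -1 / (m + 1) ^ r := by
  induction r with
  | zero =>
    simpa [mhs] using sum_Icc_neg_one_pow_mul_choose_succ (R := ℚ) (Nat.zero_le m)
  | succ r ih =>
    simp only [mhs, pow_one]
    rw [sum_Icc_neg_one_pow_mul_choose_mul_sum_div, ih]
    field_simp
    ring

theorem harm_succ (t n : ℕ) : harm t (n + 1) = harm t n + 1 / ((n : ℚ) + 1) ^ t := by
  rw [harm, harm, sum_Icc_succ_top (by omega : 1 ≤ n + 1)]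
  push_cast
  rfl

theorem stmt6_general (n : ℕ) (r : ℕ) :
    ∑ k ∈ Finset.Icc 1 n, (-1 : ℚ) ^ k * (n.choose k : ℚ) * (mhs 1 r k / k)
      = -harm (r + 1) n := by
  induction n with
  | zero => simp [harm]
  | succ n ih =>
    rw [sum_Icc_neg_one_pow_mul_choose_succ_mul_div, ih,
      sum_Icc_neg_one_pow_mul_choose_mul_mhs_one, harm_succ, div_div, ← pow_succ]
    ring

theorem stmt6 (n : ℕ) (hn : 1 ≤ n) (r : ℕ) :
    ∑ k ∈ Finset.Icc 1 n, (-1 : ℚ) ^ k * (n.choose k : ℚ) * (mhs 1 r k / k)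
      = -harm (r + 1) n :=
  stmt6_general n r
end

section
/- Let p be a prime, let a_0, …, a_{p−1} be p-adic integers, and let x be a p-adic integer. Set s := (x + ⟨−x⟩_p)/p. Then ∑_{k=0}^{p−1} ((x)_k (1−x)_k / (k!)^2) · a_k ≡ A_{⟨−x⟩_p} + s·(A_{p−1−⟨−x⟩_p} − A_{⟨−x⟩_p}) (mod p^2), where A_j := ∑_{k=0}^j (−1)^k C(j,k) C(j+k,k) a_k. -/
/-!
The sum is `G(x)` for the polynomial `G(t) = ∑_{k<p} a_k (t)_k (1-t)_k / (k!)²`, which has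
`p`-adic integer coefficients because `k!` is a unit for `k < p`. At `t = -j` one has
`(-j)_k (1+j)_k = (-1)^k C(j,k) C(j+k,k) (k!)²`, so `G(-j) = A_j`, and `G(1-t) = G(t)` gives
`G(p - r) = A_{p-1-r}`. Writing `x = -r + p s` with `r = ⟨-x⟩_p`, the second-order Taylor expansion
of `G` at `-r` with steps `p s` and `p` yields `G(x) ≡ G(-r) + s (G(p - r) - G(-r)) (mod p²)`.
-/

/-- The binomial-type transform `A_j = ∑_{k=0}^j (−1)^k C(j,k) C(j+k,k) a_k`
of a sequence of `p`-adic integers. -/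
noncomputable def Atrans (p : ℕ) [Fact p.Prime] (a : ℕ → ℤ_[p]) (j : ℕ) : ℤ_[p] :=
  ∑ k ∈ Finset.range (j + 1), (-1 : ℤ_[p]) ^ k * (j.choose k : ℤ_[p]) * ((j + k).choose k : ℤ_[p]) * a k

open Polynomial Finset

theorem Polynomial.exists_eval_add_mul_eq {R : Type*} [CommRing R] (f : R[X]) (y h c : R) :
    ∃ z, f.eval (y + h * c) = f.eval y + c * (f.eval (y + h) - f.eval y) + h ^ 2 * z := by
  obtain ⟨z₁, hz₁⟩ := f.binomExpansion y (h * c)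
  obtain ⟨z₂, hz₂⟩ := f.binomExpansion y h
  exact ⟨z₁ * c ^ 2 - c * z₂, by linear_combination hz₁ - c * hz₂⟩

section symmPochhammerSum

variable {R : Type*} [CommRing R]

theorem ascPochhammer_eval_neg_mul_eval_one_add (j k : ℕ) :
    (ascPochhammer R k).eval (-(j : R)) * (ascPochhammer R k).eval (1 + (j : R)) =
      (-1) ^ k * (j.choose k : R) * ((j + k).choose k : R) * (k.factorial : R) ^ 2 := by
  have h_neg : (ascPochhammer R k).eval (-(j : R)) = (-1) ^ k * (j.descFactorial k : R) := by
    rw [ascPochhammer_eval_neg_eq_descPochhammer, descPochhammer_eval_eq_descFactorial]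
  have h_add : (ascPochhammer R k).eval (1 + (j : R)) = ((j + 1).ascFactorial k : R) := by
    rw [← ascPochhammer_nat_eq_ascFactorial, ascPochhammer_eval_cast]
    push_cast
    ring_nf
  rw [h_neg, h_add, Nat.descFactorial_eq_factorial_mul_choose,
    Nat.ascFactorial_eq_factorial_mul_choose]
  push_cast
  ring

noncomputable def symmPochhammerSum (n : ℕ) (w : ℕ → R) : R[X] :=
  ∑ k ∈ range n, C (w k) * ascPochhammer R k * (ascPochhammer R k).comp (1 - X)

theorem eval_symmPochhammerSum (n : ℕ) (w : ℕ → R) (t : R) :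
    (symmPochhammerSum n w).eval t =
      ∑ k ∈ range n, w k * (ascPochhammer R k).eval t * (ascPochhammer R k).eval (1 - t) := by
  simp [symmPochhammerSum, eval_finsetSum, eval_comp]

theorem eval_one_sub_symmPochhammerSum (n : ℕ) (w : ℕ → R) (t : R) :
    (symmPochhammerSum n w).eval (1 - t) = (symmPochhammerSum n w).eval t := by
  simp only [eval_symmPochhammerSum, sub_sub_cancel]
  exact sum_congr rfl fun k _ ↦ by ring

theorem eval_neg_natCast_symmPochhammerSum {n j : ℕ} (hj : j < n) (w : ℕ → R) :
    (symmPochhammerSum n w).eval (-(j : R)) = ∑ k ∈ range (j + 1),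
      (-1) ^ k * (j.choose k : R) * ((j + k).choose k : R) * ((k.factorial : R) ^ 2 * w k) := by
  have h_vanish : ∀ k ∈ range n, k ∉ range (j + 1) →
      w k * (ascPochhammer R k).eval (-(j : R)) * (ascPochhammer R k).eval (1 - -(j : R)) = 0 := by
    intro k _ hk
    rw [sub_neg_eq_add, mul_assoc, ascPochhammer_eval_neg_mul_eval_one_add,
      Nat.choose_eq_zero_of_lt (by simpa using hk)]
    simp
  rw [eval_symmPochhammerSum, ← sum_subset (range_subset_range.mpr hj) h_vanish]
  refine sum_congr rfl fun k _ ↦ ?_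
  rw [sub_neg_eq_add, mul_assoc, ascPochhammer_eval_neg_mul_eval_one_add]
  ring

end symmPochhammerSum

namespace PadicInt

variable {p : ℕ} [Fact p.Prime]

theorem isUnit_factorial {k : ℕ} (hk : k < p) : IsUnit (k.factorial : ℤ_[p]) :=
  isUnit_iff.mpr <| norm_natCast_eq_one_iff.mpr <| Nat.Prime.coprime_factorial_of_lt Fact.out hk

theorem factorial_sq_mul_inverse {k : ℕ} (hk : k < p) :
    (k.factorial : ℤ_[p]) ^ 2 * Ring.inverse ((k.factorial : ℤ_[p]) ^ 2) = 1 :=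
  Ring.mul_inverse_cancel _ ((isUnit_factorial hk).pow 2)

theorem coe_inverse_factorial_sq {k : ℕ} (hk : k < p) :
    ((Ring.inverse ((k.factorial : ℤ_[p]) ^ 2) : ℤ_[p]) : ℚ_[p]) =
      ((k.factorial : ℚ_[p]) ^ 2)⁻¹ := by
  apply eq_inv_of_mul_eq_one_right
  exact_mod_cast congrArg ((↑) : ℤ_[p] → ℚ_[p]) (factorial_sq_mul_inverse hk)

theorem exists_add_zmodRepr_neg_eq_mul (x : ℤ_[p]) :
    ∃ c : ℤ_[p], x + (zmodRepr (-x) : ℤ_[p]) = p * c := by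
  have h := sub_zmodRepr_mem (-x)
  rw [maximalIdeal_eq_span_p, Ideal.mem_span_singleton] at h
  obtain ⟨d, hd⟩ := h
  exact ⟨-d, by linear_combination -hd⟩

theorem norm_p_sq_mul_le (z : ℤ_[p]) :
    ‖((p ^ 2 * z : ℤ_[p]) : ℚ_[p])‖ ≤ (p : ℝ) ^ (-2 : ℤ) := by
  rw [padic_norm_e_of_padicInt, norm_mul, norm_p_pow]
  exact mul_le_of_le_one_right (by positivity) (norm_le_one z)

end PadicInt

section atransPoly

variable {p : ℕ} [Fact p.Prime] (a : ℕ → ℤ_[p])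

noncomputable def atransPoly : ℤ_[p][X] :=
  symmPochhammerSum p fun k ↦ Ring.inverse ((k.factorial : ℤ_[p]) ^ 2) * a k

theorem coe_eval_atransPoly (x : ℤ_[p]) :
    (((atransPoly a).eval x : ℤ_[p]) : ℚ_[p]) = ∑ k ∈ range p,
      (((ascPochhammer ℤ_[p] k).eval x : ℤ_[p]) : ℚ_[p])
        * (((ascPochhammer ℤ_[p] k).eval (1 - x) : ℤ_[p]) : ℚ_[p])
        / (k.factorial : ℚ_[p]) ^ 2 * (a k : ℚ_[p]) := by
  rw [atransPoly, eval_symmPochhammerSum, PadicInt.coe_sum]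
  refine sum_congr rfl fun k hk ↦ ?_
  push_cast
  rw [PadicInt.coe_inverse_factorial_sq (mem_range.mp hk)]
  ring

theorem eval_neg_natCast_atransPoly {j : ℕ} (hj : j < p) :
    (atransPoly a).eval (-(j : ℤ_[p])) = Atrans p a j := by
  rw [atransPoly, eval_neg_natCast_symmPochhammerSum hj, Atrans]
  refine sum_congr rfl fun k hk ↦ ?_
  have hk : k < p := by simp only [mem_range] at hk; omega
  rw [← mul_assoc ((k.factorial : ℤ_[p]) ^ 2), PadicInt.factorial_sq_mul_inverse hk, one_mul]

theorem eval_neg_natCast_add_p_atransPoly {j : ℕ} (hj : j < p) :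
    (atransPoly a).eval (-(j : ℤ_[p]) + p) = Atrans p a (p - 1 - j) := by
  rw [atransPoly, ← eval_one_sub_symmPochhammerSum, ← atransPoly,
    ← eval_neg_natCast_atransPoly a (by omega : p - 1 - j < p)]
  congr 1
  push_cast [Nat.cast_sub (by omega : j ≤ p - 1), Nat.cast_sub (Fact.out : p.Prime).one_le]
  ring

end atransPoly

theorem stmt8 (p : ℕ) [Fact p.Prime] (a : ℕ → ℤ_[p]) (x : ℤ_[p])
    (s : ℚ_[p]) (hs : s = ((x : ℚ_[p]) + (PadicInt.zmodRepr (-x) : ℚ_[p])) / p) :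
    ‖(∑ k ∈ Finset.range p,
        (↑((ascPochhammer ℤ_[p] k).eval x) : ℚ_[p]) * (↑((ascPochhammer ℤ_[p] k).eval (1 - x)) : ℚ_[p])
          / (Nat.factorial k : ℚ_[p]) ^ 2 * (a k : ℚ_[p]))
      - ((Atrans p a (PadicInt.zmodRepr (-x)) : ℚ_[p])
          + s * ((Atrans p a (p - 1 - PadicInt.zmodRepr (-x)) : ℚ_[p])
              - (Atrans p a (PadicInt.zmodRepr (-x)) : ℚ_[p])))‖
      ≤ (p : ℝ) ^ (-2 : ℤ) := by
  obtain ⟨c, hc⟩ := PadicInt.exists_add_zmodRepr_neg_eq_mul x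
  set r := PadicInt.zmodRepr (-x)
  have hs_c : s = c := by
    have hc' : (x : ℚ_[p]) + r = p * c := by exact_mod_cast congrArg ((↑) : ℤ_[p] → ℚ_[p]) hc
    rw [hs, hc', mul_div_cancel_left₀ _ (by exact_mod_cast (Fact.out : p.Prime).ne_zero)]
  have hr : r < p := PadicInt.zmodRepr_lt_p (-x)
  obtain ⟨z, hz⟩ := (atransPoly a).exists_eval_add_mul_eq (-r) p c
  rw [show -(r : ℤ_[p]) + p * c = x by linear_combination -hc,
    eval_neg_natCast_add_p_atransPoly a hr, eval_neg_natCast_atransPoly a hr] at hz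
  rw [hs_c, ← coe_eval_atransPoly, hz]
  convert PadicInt.norm_p_sq_mul_le z using 2
  push_cast
  ring
end

section
/- Let p be an odd prime and let a_0, …, a_{p−1} be p-adic integers. Then ∑_{k=0}^{p−1} (C(2k,k)^2 / 16^k) · a_k ≡ A_{(p−1)/2} (mod p^2), where A_j := ∑_{k=0}^j (−1)^k C(j,k) C(j+k,k) a_k. -/
/-!
With `p = 2j + 1`, put `u_k = C(2k,k)^2` and `v_k = (-16)^k C(j,k) C(j+k,k)`. They satisfy
`(k+1)^2 u_{k+1} = 4(2k+1)^2 u_k` and `(k+1)^2 v_{k+1} = (4(2k+1)^2 - 4p^2) v_k`,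
so by induction `p^2 ∣ k!^2 (u_k - v_k)` for every `k`, hence `p^2 ∣ u_k - v_k` for `k < p`.
Since `v_k = 0` for `j < k`, the transform `A_j` may be summed over `k < p` as well, and the
congruence follows term by term: `16` is a `p`-adic unit and the `a_k` are `p`-adic integers.
-/

open Finset Nat

lemma intCast_choose_succ_right_mul (n k : ℕ) :
    (n.choose (k + 1) : ℤ) * (k + 1) = n.choose k * (n - k) := by
  rcases le_or_gt k n with hk | hk
  · have h := congrArg (Nat.cast (R := ℤ)) (choose_succ_right_eq n k)
    push_cast [Nat.cast_sub hk] at h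
    exact h
  · simp [choose_eq_zero_of_lt hk, choose_eq_zero_of_lt (Nat.lt_succ_of_lt hk)]

theorem sq_two_mul_add_one_dvd_factorial_sq_mul (j k : ℕ) :
    (2 * j + 1 : ℤ) ^ 2 ∣ (k ! : ℤ) ^ 2 *
      ((centralBinom k : ℤ) ^ 2 - (-16) ^ k * j.choose k * (j + k).choose k) := by
  induction k with
  | zero => simp
  | succ k ih =>
    obtain ⟨c, hc⟩ := ih
    have hu : (k + 1 : ℤ) * centralBinom (k + 1) = 2 * (2 * k + 1) * centralBinom k := by
      exact_mod_cast succ_mul_centralBinom_succ k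
    have hv₁ := intCast_choose_succ_right_mul j k
    have hv₂ : ((j + (k + 1)).choose (k + 1) : ℤ) * (k + 1) = (j + k).choose k * (j + k + 1) := by
      exact_mod_cast (add_one_mul_choose_eq (j + k) k).symm.trans (by ring)
    refine ⟨4 * (2 * k + 1) ^ 2 * c
      + 4 * (k ! : ℤ) ^ 2 * (-16) ^ k * j.choose k * (j + k).choose k, ?_⟩
    push_cast [factorial_succ]
    linear_combination
      (k ! : ℤ) ^ 2 * ((k + 1 : ℤ) * centralBinom (k + 1) + 2 * (2 * k + 1) * centralBinom k) * hu
      + 4 * (2 * k + 1) ^ 2 * hc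
      - (k ! : ℤ) ^ 2 * (-16) ^ (k + 1) * (((j + (k + 1)).choose (k + 1) : ℤ) * (k + 1) * hv₁
        + (j.choose k * (j - k)) * hv₂)

theorem sq_dvd_sq_centralBinom_sub {p j k : ℕ} (hp : p.Prime) (hpj : p = 2 * j + 1) (hk : k < p) :
    (p : ℤ) ^ 2 ∣ (centralBinom k : ℤ) ^ 2 - (-16) ^ k * j.choose k * (j + k).choose k := by
  have hcop : IsCoprime ((p : ℤ) ^ 2) ((k ! : ℤ) ^ 2) :=
    (Nat.isCoprime_iff_coprime.mpr (hp.coprime_factorial_of_lt hk)).pow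
  refine hcop.dvd_of_dvd_mul_left ?_
  subst hpj
  exact_mod_cast sq_two_mul_add_one_dvd_factorial_sq_mul j k

theorem Atrans_eq_sum_range {p : ℕ} [Fact p.Prime] (a : ℕ → ℤ_[p]) {j n : ℕ} (hjn : j < n) :
    Atrans p a j = ∑ k ∈ range n,
      (-1 : ℤ_[p]) ^ k * (j.choose k : ℤ_[p]) * ((j + k).choose k : ℤ_[p]) * a k := by
  refine sum_subset (range_subset_range.mpr hjn) fun k _ hk => ?_
  rw [mem_range, not_lt] at hk
  simp [choose_eq_zero_of_lt (Nat.lt_of_succ_le hk)]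

theorem Padic.norm_sixteen_eq_one {p : ℕ} [Fact p.Prime] (hp : p ≠ 2) : ‖(16 : ℚ_[p])‖ = 1 := by
  have hcop : p.Coprime (2 ^ 4) :=
    ((Nat.coprime_primes Fact.out prime_two).mpr hp).pow_right 4
  exact_mod_cast Padic.norm_natCast_eq_one_iff.mpr hcop

theorem norm_sq_choose_div_sub_le {p j k : ℕ} [Fact p.Prime] (hpj : p = 2 * j + 1) (hk : k < p)
    (x : ℤ_[p]) :
    ‖((2 * k).choose k : ℚ_[p]) ^ 2 / 16 ^ k * (x : ℚ_[p])
      - (((-1) ^ k * (j.choose k : ℤ_[p]) * ((j + k).choose k : ℤ_[p]) * x : ℤ_[p]) : ℚ_[p])‖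
      ≤ (p : ℝ) ^ (-2 : ℤ) := by
  have hterm : ((2 * k).choose k : ℚ_[p]) ^ 2 / 16 ^ k * (x : ℚ_[p])
      - (((-1) ^ k * (j.choose k : ℤ_[p]) * ((j + k).choose k : ℤ_[p]) * x : ℤ_[p]) : ℚ_[p])
      = (((centralBinom k : ℤ) ^ 2 - (-16) ^ k * j.choose k * (j + k).choose k : ℤ) : ℚ_[p])
        / 16 ^ k * (x : ℚ_[p]) := by
    rw [centralBinom_eq_two_mul_choose]
    push_cast
    rw [show (-16 : ℚ_[p]) = -1 * 16 by norm_num, mul_pow]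
    field_simp
  have hdvd := sq_dvd_sq_centralBinom_sub Fact.out hpj hk
  rw [hterm, norm_mul, norm_div, norm_pow, Padic.norm_sixteen_eq_one (by omega), one_pow, div_one]
  calc _ ≤ (p : ℝ) ^ (-2 : ℤ) * 1 := by
        gcongr
        · exact_mod_cast (Padic.norm_int_le_pow_iff_dvd _ 2).mpr (by exact_mod_cast hdvd)
        · exact PadicInt.norm_le_one x
    _ = _ := mul_one _

theorem stmt9 (p : ℕ) [Fact p.Prime] (hp : p ≠ 2) (a : ℕ → ℤ_[p]) :
    ‖(∑ k ∈ Finset.range p,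
        (((2 * k).choose k : ℚ_[p])) ^ 2 / (16 : ℚ_[p]) ^ k * (a k : ℚ_[p]))
      - ((Atrans p a ((p - 1) / 2) : ℚ_[p]))‖ ≤ (p : ℝ) ^ (-2 : ℤ) := by
  obtain ⟨j, hpj⟩ : ∃ j, p = 2 * j + 1 := (Fact.out : p.Prime).odd_of_ne_two hp
  rw [show (p - 1) / 2 = j by omega, Atrans_eq_sum_range a (show j < p by omega),
    PadicInt.coe_sum, ← sum_sub_distrib]
  exact IsUltrametricDist.norm_sum_le_of_forall_le_of_nonneg (by positivity)
    fun k hk => norm_sq_choose_div_sub_le hpj (mem_range.mp hk) (a k)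
end

section
/- Let p be a prime, let a_0, …, a_{p−1} be p-adic integers, and let 0 ≤ j ≤ p−1. Then A_{p−1−j} ≡ A_j (mod p), where A_j := ∑_{k=0}^j (−1)^k C(j,k) C(j+k,k) a_k. -/
open Finset Nat

lemma asc_prod (n k : ℕ) : n.ascFactorial k = ∏ i ∈ range k, (n + i) := by
  induction k with
  | zero => simp
  | succ k ih => rw [Nat.ascFactorial_succ, prod_range_succ, ih, mul_comm]

/-- `k! * C(n,k)` as a product in `ZMod p`. -/
lemma desc_zmod (p n k : ℕ) :
    ((k ! * n.choose k : ℕ) : ZMod p) = ∏ i ∈ range k, ((n : ZMod p) - i) := by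
  rw [← Nat.descFactorial_eq_factorial_mul_choose, Nat.descFactorial_eq_prod_range,
    Nat.cast_prod]
  rcases le_or_gt k n with h | h
  · refine prod_congr rfl fun i hi => ?_
    have : i ≤ n := le_trans (le_of_lt (mem_range.mp hi)) h
    push_cast [this]
    ring
  · rw [prod_eq_zero (mem_range.mpr h) (by simp [Nat.sub_self]),
      prod_eq_zero (i := n) (mem_range.mpr h) (by simp)]

lemma asc_zmod (p n k : ℕ) :
    ((k ! * (n + k).choose k : ℕ) : ZMod p) = ∏ i ∈ range k, ((n : ZMod p) + 1 + i) := by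
  rw [← Nat.ascFactorial_eq_factorial_mul_choose, asc_prod, Nat.cast_prod]
  refine prod_congr rfl fun i hi => ?_
  push_cast
  ring

lemma key (p : ℕ) [hp : Fact p.Prime] (j k : ℕ) (hj : j ≤ p - 1) (hk : k < p) :
    (p : ℤ) ∣ ((p - 1 - j).choose k * ((p - 1 - j) + k).choose k : ℤ)
      - (j.choose k * (j + k).choose k : ℤ) := by
  set m := p - 1 - j with hm
  have hp1 : 1 ≤ p := hp.out.one_lt.le
  have hmj : (m : ZMod p) = -1 - (j : ZMod p) := by
    have h : m + j + 1 = p := by omega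
    have := congrArg (Nat.cast : ℕ → ZMod p) h
    push_cast at this
    rw [ZMod.natCast_self] at this
    linear_combination this
  have hfac : ((k ! : ℕ) : ZMod p) ≠ 0 := by
    rw [Ne, ZMod.natCast_eq_zero_iff]
    intro h
    exact absurd ((Nat.Prime.dvd_factorial hp.out).mp h) (by omega)
  have hmain : ((m.choose k * (m + k).choose k : ℕ) : ZMod p)
      = ((j.choose k * (j + k).choose k : ℕ) : ZMod p) := by
    have h2 : ((k ! : ℕ) : ZMod p) * ((k ! : ℕ) : ZMod p) ≠ 0 := mul_ne_zero hfac hfac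
    apply mul_left_cancel₀ h2
    have e1 : ∀ n : ℕ, ((k ! : ℕ) : ZMod p) * ((k ! : ℕ) : ZMod p)
        * ((n.choose k * (n + k).choose k : ℕ) : ZMod p)
        = ∏ i ∈ range k, (((n : ZMod p) - i) * ((n : ZMod p) + 1 + i)) := by
      intro n
      rw [prod_mul_distrib, ← desc_zmod, ← asc_zmod]
      push_cast
      ring
    rw [e1, e1, hmj]
    refine prod_congr rfl fun i _ => ?_
    ring
  rw [← ZMod.intCast_zmod_eq_zero_iff_dvd]
  push_cast
  push_cast at hmain
  linear_combination hmain

lemma atrans_ext (p : ℕ) [hp : Fact p.Prime] (a : ℕ → ℤ_[p]) (j : ℕ) (hj : j ≤ p - 1) :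
    Atrans p a j = ∑ k ∈ range p,
      (-1 : ℤ_[p]) ^ k * (j.choose k : ℤ_[p]) * ((j + k).choose k : ℤ_[p]) * a k := by
  have hp1 : 1 ≤ p := hp.out.one_lt.le
  refine Finset.sum_subset (range_subset_range.mpr (by omega)) fun k _ hk => ?_
  have : j < k := by simpa using Nat.lt_of_succ_le (not_lt.mp (fun h => hk (mem_range.mpr h)))
  rw [Nat.choose_eq_zero_of_lt this]
  simp

theorem stmt12 (p : ℕ) [Fact p.Prime] (a : ℕ → ℤ_[p]) (j : ℕ) (hj : j ≤ p - 1) :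
    (p : ℤ_[p]) ∣ Atrans p a (p - 1 - j) - Atrans p a j := by
  have hm : p - 1 - j ≤ p - 1 := by omega
  rw [atrans_ext p a _ hm, atrans_ext p a j hj, ← Finset.sum_sub_distrib]
  refine Finset.dvd_sum fun k hk => ?_
  have hk' : k < p := mem_range.mp hk
  obtain ⟨c, hc⟩ := key p j k hj hk'
  have : (-1 : ℤ_[p]) ^ k * ((p - 1 - j).choose k : ℤ_[p]) * (((p - 1 - j) + k).choose k : ℤ_[p]) * a k
      - (-1 : ℤ_[p]) ^ k * (j.choose k : ℤ_[p]) * ((j + k).choose k : ℤ_[p]) * a k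
      = (p : ℤ_[p]) * ((c : ℤ_[p]) * ((-1) ^ k * a k)) := by
    have := congrArg (fun z : ℤ => (z : ℤ_[p])) hc
    push_cast at this
    linear_combination ((-1 : ℤ_[p]) ^ k * a k) * this
  rw [this]
  exact Dvd.intro _ rfl
end

section
/- For all integers 0 ≤ k ≤ j ≤ p−1 with p prime, one has C(p−1−j, k)·C(p−1−j+k, k) ≡ C(j,k)·C(j+k,k) (mod p). -/
open Finset Nat

theorem stmt13 (p : ℕ) (hp : p.Prime) (j k : ℕ) (hkj : k ≤ j) (hjp : j ≤ p - 1) :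
    ((p - 1 - j).choose k * (p - 1 - j + k).choose k : ℤ)
      ≡ (j.choose k * (j + k).choose k : ℤ) [ZMOD p] := by
  haveI := Fact.mk hp
  have hp1 : 1 ≤ p := hp.one_le
  have hkp : k < p := by omega
  rcases le_or_gt k (p - 1 - j) with hk | hk
  · -- main case
    rw [← ZMod.intCast_eq_intCast_iff]
    push_cast
    have hstep1 : (p - 1 - j + k).descFactorial k = ∏ i ∈ range k, (p - j + i) := by
      rw [Nat.descFactorial_eq_prod_range, ← Finset.prod_range_reflect]
      exact Finset.prod_congr rfl fun i hi => by simp only [mem_range] at hi; omega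
    have hstep2 : (j + k).descFactorial k = ∏ i ∈ range k, (j + 1 + i) := by
      rw [Nat.descFactorial_eq_prod_range, ← Finset.prod_range_reflect]
      exact Finset.prod_congr rfl fun i hi => by simp only [mem_range] at hi; omega
    have t1 : ∀ i ∈ range k, ((p - 1 - j - i : ℕ) : ZMod p) = -((j + 1 + i : ℕ) : ZMod p) := by
      intro i hi
      simp only [mem_range] at hi
      have hadd : (p - 1 - j - i) + (j + 1 + i) = p := by omega
      have h := congrArg (Nat.cast : ℕ → ZMod p) hadd
      push_cast at h
      rw [ZMod.natCast_self] at h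
      push_cast
      linear_combination h
    have t2 : ∀ i ∈ range k, ((p - j + i : ℕ) : ZMod p) = -((j - i : ℕ) : ZMod p) := by
      intro i hi
      simp only [mem_range] at hi
      have hadd : (p - j + i) + (j - i) = p := by omega
      have h := congrArg (Nat.cast : ℕ → ZMod p) hadd
      push_cast at h
      rw [ZMod.natCast_self] at h
      push_cast
      linear_combination h
    have key : ((p - 1 - j).descFactorial k : ZMod p) * ((p - 1 - j + k).descFactorial k)
        = ((j + k).descFactorial k : ZMod p) * (j.descFactorial k) := by
      rw [hstep1, hstep2, Nat.descFactorial_eq_prod_range (p - 1 - j),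
        Nat.descFactorial_eq_prod_range j, Nat.cast_prod, Nat.cast_prod, Nat.cast_prod,
        Nat.cast_prod, Finset.prod_congr rfl t1, Finset.prod_congr rfl t2]
      have hneg : ∀ f : ℕ → ZMod p,
          (∏ i ∈ range k, -f i) = (-1) ^ k * ∏ i ∈ range k, f i := fun f => by
        rw [Finset.prod_congr rfl fun i _ => (neg_one_mul (f i)).symm,
          Finset.prod_mul_distrib, Finset.prod_const, Finset.card_range]
      rw [hneg, hneg, mul_mul_mul_comm, ← pow_add, Even.neg_one_pow ⟨k, rfl⟩, one_mul]
    have hfk : ((k ! : ℕ) : ZMod p) ≠ 0 := by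
      rw [Ne, ZMod.natCast_eq_zero_iff, hp.dvd_factorial]
      omega
    refine mul_left_cancel₀ (mul_ne_zero hfk hfk) ?_
    calc ((k ! : ℕ) : ZMod p) * (k ! : ℕ)
            * (((p - 1 - j).choose k : ZMod p) * ((p - 1 - j + k).choose k))
        = ((k ! * (p - 1 - j).choose k : ℕ) : ZMod p)
            * ((k ! * (p - 1 - j + k).choose k : ℕ) : ZMod p) := by push_cast; ring
      _ = ((p - 1 - j).descFactorial k : ZMod p) * ((p - 1 - j + k).descFactorial k) := by
          rw [← Nat.descFactorial_eq_factorial_mul_choose,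
            ← Nat.descFactorial_eq_factorial_mul_choose]
      _ = ((j + k).descFactorial k : ZMod p) * (j.descFactorial k) := key
      _ = ((k ! * (j + k).choose k : ℕ) : ZMod p) * ((k ! * j.choose k : ℕ) : ZMod p) := by
          rw [← Nat.descFactorial_eq_factorial_mul_choose,
            ← Nat.descFactorial_eq_factorial_mul_choose]
      _ = ((k ! : ℕ) : ZMod p) * (k ! : ℕ) * ((j.choose k : ZMod p) * ((j + k).choose k)) := by
          push_cast; ring
  · -- degenerate case: both sides ≡ 0
    have hdvd : p ∣ (j + k).choose k := hp.dvd_choose hkp (by omega) (by omega)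
    rw [Nat.choose_eq_zero_of_lt hk]
    have h0 : (j.choose k * (j + k).choose k : ℤ) ≡ 0 [ZMOD p] :=
      (Int.modEq_zero_iff_dvd).mpr (Dvd.dvd.mul_left (Int.natCast_dvd_natCast.mpr hdvd) _)
    simpa using h0.symm
end

section
/- For all integers n ≥ 1 and r ≥ 0, one has the identity in ℚ: ∑_{k=1}^n (−1)^k C(n,k) C(n+k,k) · S_k({2}^r)/k = −2·H_n^{(2r+1)}. -/
lemma lemA (a l : ℕ) : (l+1) * ((a+2*l+1).choose (l+1)) = (a+l+1) * ((a+2*l+1).choose l) := by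
  have h := Nat.choose_succ_right_eq (a+2*l+1) l
  have h2 : a+2*l+1-l = a+l+1 := by omega
  rw [h2] at h
  linarith [h]

lemma lemB (a l : ℕ) : (l+1) * ((a+l).choose (l+1)) = a * ((a+l).choose l) := by
  have h := Nat.choose_succ_right_eq (a+l) l
  have h2 : a+l-l = a := by omega
  rw [h2] at h
  linarith [h]

lemma lemC (a l : ℕ) :
    (l+1)*((a+2*l+2).choose (l+1) * (a+l).choose (l+1) + (a+2*l+1).choose l * (a+l).choose l)
      = (a+l+1) * ((a+2*l+1).choose (l+1)) * ((a+l).choose l) := by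
  have hp : (a+2*l+2).choose (l+1) = (a+2*l+1).choose l + (a+2*l+1).choose (l+1) := by
    have h3 : a+2*l+2 = (a+2*l+1)+1 := by omega
    rw [h3, Nat.choose_succ_succ]
  have hA := lemA a l
  have hB := lemB a l
  zify at hA hB hp ⊢
  linear_combination (((a+l).choose (l+1) : ℤ) * (l+1)) * hp
    + ((((a+2*l+1).choose l : ℤ)) + (((a+2*l+1).choose (l+1) : ℤ))) * hB
    - (((a+l).choose l : ℤ)) * hA

lemma lemE (n j : ℕ) :
    (n+j+1).choose j * (n+1).choose (j+1) = n.choose j * (n+j+1).choose (j+1) := by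
  apply Nat.eq_of_mul_eq_mul_right (Nat.succ_pos j)
  have h1 := Nat.choose_succ_right_eq (n+1) j
  have h2 := Nat.choose_succ_right_eq (n+j+1) j
  have h3 := Nat.choose_mul_succ_eq n j
  have h4 : n+j+1-j = n+1 := by omega
  rw [h4] at h2
  rw [mul_assoc, h1, mul_assoc, h2, ← h3]
  ring

lemma lemDelta (n j : ℕ) :
    (n+1).choose (j+1) * ((n+j+2).choose (j+1))
      = n.choose (j+1) * ((n+j+1).choose (j+1)) + 2 * ((n+j+1).choose (j+1)) * (n.choose j) := by
  have hp1 : (n+1).choose (j+1) = n.choose j + n.choose (j+1) := Nat.choose_succ_succ n j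
  have hp2 : (n+j+2).choose (j+1) = (n+j+1).choose j + (n+j+1).choose (j+1) := by
    have h3 : n+j+2 = (n+j+1)+1 := by omega
    rw [h3, Nat.choose_succ_succ]
  have hE := lemE n j
  zify at hp1 hp2 hE ⊢
  linear_combination (((n+j+2).choose (j+1) : ℤ) - (((n+j+1).choose j : ℤ))) * hp1
    + (((n.choose j : ℤ)) + ((n.choose (j+1) : ℤ))) * hp2 + hE

lemma mhs_zero (r : ℕ) : mhs 2 (r+1) 0 = 0 := by simp [mhs]

lemma mhs_depth0 (n : ℕ) : mhs 2 0 n = 1 := by simp [mhs]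

lemma mhs_one (r : ℕ) : mhs 2 r 1 = 1 := by
  induction r with
  | zero => simp [mhs]
  | succ r ih => simp [mhs, ih]

lemma mhs_rec (i K : ℕ) :
    mhs 2 (i+1) (K+1) = mhs 2 (i+1) K + mhs 2 i (K+1) / ((K:ℚ)+1)^2 := by
  show (∑ j ∈ Finset.Icc 1 (K+1), mhs 2 i j / (j:ℚ)^2) = _
  rw [Finset.sum_Icc_succ_top (by omega)]
  push_cast
  rfl

lemma lemAQ (m K : ℕ) (h : K+1 ≤ m) :
    ((K:ℚ)+1) * (((m+K).choose (K+1) : ℚ)) = (m:ℚ) * (((m+K).choose K : ℚ)) := by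
  obtain ⟨a, rfl⟩ : ∃ a, m = a + K + 1 := ⟨m-K-1, by omega⟩
  have h1 := lemA a K
  have h2 : a+2*K+1 = a+K+1+K := by omega
  rw [h2] at h1
  exact_mod_cast h1

lemma lemCQ (m K : ℕ) (h : K+1 ≤ m) :
    ((K:ℚ)+1) * ((((m+K+1).choose (K+1):ℚ)) * (((m-1).choose (K+1):ℚ))
        + (((m+K).choose K:ℚ)) * (((m-1).choose K:ℚ)))
      = (m:ℚ) * (((m+K).choose (K+1):ℚ)) * (((m-1).choose K:ℚ)) := by
  obtain ⟨a, rfl⟩ : ∃ a, m = a + K + 1 := ⟨m-K-1, by omega⟩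
  have h1 := lemC a K
  have h2 : a+2*K+1 = a+K+1+K := by omega
  have h3 : a+2*K+2 = a+K+1+K+1 := by omega
  have h4 : a+K+1-1 = a+K := by omega
  rw [h2, h3] at h1
  rw [h4]
  exact_mod_cast h1

lemma core2 (m K r : ℕ) (hK : K+1 ≤ m) :
    ((K:ℚ)+1)^2 * ((((m+K+1).choose (K+1):ℚ) * ((m-1).choose (K+1):ℚ))
        * (∑ i ∈ Finset.range (r+1), mhs 2 i (K+1) * (m:ℚ)^(2*i))
      + (((m+K).choose K:ℚ) * ((m-1).choose K:ℚ))
        * (∑ i ∈ Finset.range (r+1), mhs 2 i K * (m:ℚ)^(2*i)))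
      = ((K:ℚ)+1) * (((m+K).choose (K+1):ℚ)) * (((m-1).choose K:ℚ))
          * mhs 2 r (K+1) * (m:ℚ)^(2*r+1) := by
  have e3 := lemCQ m K hK
  have e4 := lemAQ m K hK
  induction r with
  | zero =>
      simp only [zero_add, Finset.sum_range_one, mhs_depth0, Nat.mul_zero, pow_zero,
        mul_one, pow_one]
      linear_combination ((K:ℚ)+1) * e3
  | succ r ih =>
      rw [Finset.sum_range_succ (fun i => mhs 2 i (K+1) * (m:ℚ)^(2*i)) (r+1),
        Finset.sum_range_succ (fun i => mhs 2 i K * (m:ℚ)^(2*i)) (r+1)]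
      have hp1 : (m:ℚ)^(2*(r+1)+1) = (m:ℚ)^(2*r+1) * (m:ℚ)^2 := by
        rw [show 2*(r+1)+1 = (2*r+1)+2 from by omega, pow_add]
      have hp2 : (m:ℚ)^(2*(r+1)) = (m:ℚ)^(2*r+1) * (m:ℚ) := by
        rw [show 2*(r+1) = (2*r+1)+1 from by omega, pow_succ]
      rw [hp1, hp2]
      have e2 : ((K:ℚ)+1)^2 * mhs 2 (r+1) (K+1)
          = ((K:ℚ)+1)^2 * mhs 2 (r+1) K + mhs 2 r (K+1) := by
        have h := mhs_rec r K
        have hKne : ((K:ℚ)+1) ≠ 0 := by positivity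
        field_simp at h
        linear_combination h
      linear_combination ih
        - ((((m+K).choose K:ℚ) * ((m-1).choose K:ℚ)) * (m:ℚ)^(2*r+1) * (m:ℚ)) * e2
        + (((K:ℚ)+1) * mhs 2 (r+1) (K+1) * (m:ℚ)^(2*r+1) * (m:ℚ)) * e3
        + ((m:ℚ)^(2*r+1) * (((m-1).choose K:ℚ)) * mhs 2 r (K+1)) * e4

lemma star' (m : ℕ) (hm : 1 ≤ m) (K : ℕ) (hK : K ≤ m) (r : ℕ) :
    ∑ k ∈ Finset.Icc 1 K, (-1:ℚ)^k * (((m+k-1).choose k : ℚ) * (((m-1).choose (k-1)):ℚ) / k)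
        * mhs 2 r k * (m:ℚ)^(2*r+1)
      = -1 + (-1:ℚ)^K * (((m+K).choose K : ℚ) * (((m-1).choose K):ℚ))
          * ∑ i ∈ Finset.range (r+1), mhs 2 i K * (m:ℚ)^(2*i) := by
  induction K with
  | zero =>
      have h0 : Finset.Icc 1 0 = (∅ : Finset ℕ) := by simp
      rw [h0, Finset.sum_empty]
      have hs : ∑ i ∈ Finset.range (r+1), mhs 2 i 0 * (m:ℚ)^(2*i) = 1 := by
        rw [Finset.sum_eq_single_of_mem 0 (by simp)]
        · simp [mhs_depth0]
        · intro b _ hb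
          obtain ⟨c, rfl⟩ := Nat.exists_eq_succ_of_ne_zero hb
          simp [mhs_zero]
      rw [hs]
      norm_num
  | succ K ih =>
      have hK' : K ≤ m := by omega
      rw [Finset.sum_Icc_succ_top (by omega : 1 ≤ K+1), ih hK']
      have hne : ((K:ℚ)+1) ≠ 0 := by positivity
      have hA : ((K:ℚ)+1) * ((((m+K+1).choose (K+1):ℚ) * ((m-1).choose (K+1):ℚ))
            * (∑ i ∈ Finset.range (r+1), mhs 2 i (K+1) * (m:ℚ)^(2*i))
          + (((m+K).choose K:ℚ) * ((m-1).choose K:ℚ))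
            * (∑ i ∈ Finset.range (r+1), mhs 2 i K * (m:ℚ)^(2*i)))
          = (((m+K).choose (K+1):ℚ)) * (((m-1).choose K:ℚ))
              * mhs 2 r (K+1) * (m:ℚ)^(2*r+1) := by
        apply mul_left_cancel₀ hne
        linear_combination core2 m K r hK
      simp only [show m+(K+1)-1 = m+K from by omega, show m+(K+1) = m+K+1 from by omega,
        Nat.add_sub_cancel]
      push_cast
      rw [pow_succ]
      field_simp
      linear_combination ((-1:ℚ)^K) * hA

theorem stmt15 (n : ℕ) (hn : 1 ≤ n) (r : ℕ) :
    ∑ k ∈ Finset.Icc 1 n,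
        (-1 : ℚ) ^ k * (n.choose k : ℚ) * ((n + k).choose k : ℚ) * (mhs 2 r k / k)
      = -2 * harm (2 * r + 1) n := by
  induction n with
  | zero => omega
  | succ n ih =>
    rcases Nat.eq_zero_or_pos n with h0 | hpos
    · subst h0
      rw [show (0:ℕ)+1 = 1 from rfl]
      rw [Finset.Icc_self, Finset.sum_singleton]
      have hh : harm (2*r+1) 1 = 1 := by
        rw [harm, Finset.Icc_self, Finset.sum_singleton]
        norm_num
      rw [hh, mhs_one]
      norm_num
    · have ihn := ih hpos
      have hm1 : (1:ℕ) ≤ n + 1 := by omega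
      -- star' at m = K = n+1
      have hstar := star' (n+1) hm1 (n+1) le_rfl r
      simp only [Nat.add_sub_cancel, add_right_comm n 1, Nat.choose_succ_self,
        Nat.cast_zero, mul_zero, zero_mul, add_zero] at hstar
      -- hstar : ∑ k ∈ Icc 1 (n+1), (-1)^k * (C(n+k,k)*C(n,k-1)/k) * mhs 2 r k * (n+1)^(2r+1) = -1
      rw [← Finset.sum_mul] at hstar
      have hc0 : ((n:ℚ)+1)^(2*r+1) ≠ 0 := by positivity
      have hcast : ((n+1 : ℕ) : ℚ) = (n:ℚ)+1 := by push_cast; ring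
      rw [hcast] at hstar
      have hsum : ∑ k ∈ Finset.Icc 1 (n+1),
          (-1:ℚ)^k * (((n+k).choose k : ℚ) * ((n).choose (k-1) : ℚ) / k) * mhs 2 r k
          = -1 / ((n:ℚ)+1)^(2*r+1) := by
        rw [eq_div_iff hc0]
        exact hstar
      -- split the main sum
      have hDel : ∀ k ∈ Finset.Icc 1 (n+1),
          (-1:ℚ)^k * ((n+1).choose k : ℚ) * (((n+1)+k).choose k : ℚ) * (mhs 2 r k / k)
            = (-1:ℚ)^k * (n.choose k : ℚ) * ((n+k).choose k : ℚ) * (mhs 2 r k / k)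
              + 2 * ((-1:ℚ)^k * (((n+k).choose k : ℚ) * ((n).choose (k-1) : ℚ) / k)
                  * mhs 2 r k) := by
        intro k hk
        have hk1 : 1 ≤ k := (Finset.mem_Icc.mp hk).1
        obtain ⟨j, rfl⟩ : ∃ j, k = j+1 := ⟨k-1, by omega⟩
        have hq : (((n+1).choose (j+1) : ℚ)) * (((n+j+2).choose (j+1) : ℚ))
            = (n.choose (j+1) : ℚ) * ((n+j+1).choose (j+1) : ℚ)
              + 2 * ((n+j+1).choose (j+1) : ℚ) * (n.choose j : ℚ) := by
          exact_mod_cast congrArg (Nat.cast (R := ℚ)) (lemDelta n j)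
        simp only [show (n+1)+(j+1) = n+j+2 from by omega, show n+(j+1) = n+j+1 from by omega,
          Nat.add_sub_cancel]
        push_cast
        linear_combination ((-1:ℚ)^(j+1) * mhs 2 r (j+1) / ((j:ℚ)+1)) * hq
      rw [Finset.sum_congr rfl hDel, Finset.sum_add_distrib]
      rw [Finset.sum_Icc_succ_top (by omega : (1:ℕ) ≤ n+1)
        (fun k => (-1:ℚ)^k * (n.choose k : ℚ) * ((n+k).choose k : ℚ) * (mhs 2 r k / k))]
      rw [ihn]
      rw [← Finset.mul_sum, hsum]
      have hharm : harm (2*r+1) (n+1) = harm (2*r+1) n + 1/((n:ℚ)+1)^(2*r+1) := by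
        rw [harm, harm, Finset.sum_Icc_succ_top (by omega : (1:ℕ) ≤ n+1)]
        push_cast
        ring
      rw [hharm, Nat.choose_succ_self]
      push_cast
      ring
end
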